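/- The functional E(σ) := ‖σ‖_γ ln ‖σ‖_γ does not satisfy the superposition axiom (P4): there exist Schmidt orthogonal pure states ψ₁, ψ₂ and amplitudes λ₁, λ₂ with |λ₁|² + |λ₂|² = 1 such that E(P_{λ₁ψ₁+λ₂ψ₂}) ≠ E(|λ₁|², |λ₂|²) + |λ₁|² E(P_{ψ₁}) + |λ₂|² E(P_{ψ₂}). -/

import Mathlib

open scoped BigOperators ComplexOrder
open Matrix

noncomputable section

/-- Finite-dimensional complex Hilbert space of dimension `m`. -/
abbrev H (m : ℕ) := EuclideanSpace ℂ (Fin m)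

/-- The tensor product `H m ⊗ H n`, realized as `EuclideanSpace ℂ (Fin m × Fin n)`. -/
abbrev HT (m n : ℕ) := EuclideanSpace ℂ (Fin m × Fin n)

/-- Elementary tensor `a ⊗ b`. -/
def tensorVec {m n : ℕ} (a : H m) (b : H n) : HT m n :=
  WithLp.toLp 2 (fun p : Fin m × Fin n => a p.1 * b p.2)

/-- The projection `|ψ⟩⟨ψ|` as a matrix. -/
def proj {m n : ℕ} (ψ : HT m n) : Matrix (Fin m × Fin n) (Fin m × Fin n) ℂ :=
  Matrix.of fun x y => ψ x * (starRingEnd ℂ) (ψ y)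

/-- The projection `|a⟩⟨a|` on a single factor. -/
def proj1 {m : ℕ} (a : H m) : Matrix (Fin m) (Fin m) ℂ :=
  Matrix.of fun i j => a i * (starRingEnd ℂ) (a j)

/-- Partial trace over the second factor. -/
def ptrace2 {m n : ℕ} (M : Matrix (Fin m × Fin n) (Fin m × Fin n) ℂ) :
    Matrix (Fin m) (Fin m) ℂ :=
  Matrix.of fun i j => ∑ k : Fin n, M (i, k) (j, k)

/-- Partial trace over the first factor. -/
def ptrace1 {m n : ℕ} (M : Matrix (Fin m × Fin n) (Fin m × Fin n) ℂ) :
    Matrix (Fin n) (Fin n) ℂ :=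
  Matrix.of fun i j => ∑ k : Fin m, M (k, i) (k, j)

/-- Von Neumann entropy `-Tr(ρ ln ρ)` of a Hermitian matrix, via its eigenvalues. -/
def vnEnt {k : ℕ} {M : Matrix (Fin k) (Fin k) ℂ} (h : M.IsHermitian) : ℝ :=
  ∑ i, Real.negMulLog (h.eigenvalues i)

/-- Kronecker product of square matrices. -/
def kron {m n : ℕ} (A : Matrix (Fin m) (Fin m) ℂ) (B : Matrix (Fin n) (Fin n) ℂ) :
    Matrix (Fin m × Fin n) (Fin m × Fin n) ℂ :=
  Matrix.of fun p q => A p.1 q.1 * B p.2 q.2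

/-- Action of a matrix on a vector. -/
def matVec {m n : ℕ} (M : Matrix (Fin m × Fin n) (Fin m × Fin n) ℂ) (ψ : HT m n) :
    HT m n := WithLp.toLp 2 (fun p : Fin m × Fin n => ∑ q, M p q * ψ q)

/-- The canonical pure state with Schmidt coefficients `μ`. -/
def stdVec {k : ℕ} (μ : Fin k → ℝ) : HT k k :=
  WithLp.toLp 2 (fun p : Fin k × Fin k => if p.1 = p.2 then (Real.sqrt (μ p.1) : ℂ) else 0)

/-- Strong Schmidt orthogonality: the supports of both reduced density matrices
are orthogonal. -/
def SchmidtOrthogonal {m n : ℕ} (ψ φ : HT m n) : Prop :=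
  ptrace2 (proj ψ) * ptrace2 (proj φ) = 0 ∧ ptrace1 (proj ψ) * ptrace1 (proj φ) = 0

/-- Image of `ψ` under the tensor product of two isometric embeddings. -/
def tensorMap {m n m' n' : ℕ} (f : H m →ₗᵢ[ℂ] H m') (g : H n →ₗᵢ[ℂ] H n')
    (ψ : HT m n) : HT m' n' :=
  WithLp.toLp 2 (fun p : Fin m' × Fin n' => ∑ q : Fin m × Fin n,
    ψ q * f (EuclideanSpace.single q.1 1) p.1 * g (EuclideanSpace.single q.2 1) p.2)

/-- Finite probability distribution. -/
def IsProbDist {k : ℕ} (p : Fin k → ℝ) : Prop := (∀ i, 0 ≤ p i) ∧ ∑ i, p i = 1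

/-- Multiset of nonzero Schmidt coefficients of `ψ` (eigenvalues of the reduced
density matrix). -/
def schmidtMultiset {m n : ℕ} (ψ : HT m n) (h : (ptrace2 (proj ψ)).IsHermitian) :
    Multiset ℝ :=
  (Finset.univ.val.map h.eigenvalues).filter (· ≠ 0)

/-- Trace norm of a matrix. -/
def trNorm {a b : ℕ} (A : Matrix (Fin a) (Fin b) ℂ) : ℝ :=
  ∑ i, Real.sqrt ((Matrix.posSemidef_conjTranspose_mul_self A).1.eigenvalues i)

/-- The greatest cross norm. -/
def gcn {m n : ℕ} (M : Matrix (Fin m × Fin n) (Fin m × Fin n) ℂ) : ℝ :=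
  sInf { t : ℝ | ∃ (k : ℕ) (x : Fin k → Matrix (Fin m) (Fin m) ℂ)
    (y : Fin k → Matrix (Fin n) (Fin n) ℂ),
    M = ∑ i, kron (x i) (y i) ∧ t = ∑ i, trNorm (x i) * trNorm (y i) }

/-- Density operator. -/
def IsDensity {d : Type*} [Fintype d] [DecidableEq d] (M : Matrix d d ℂ) : Prop :=
  M.PosSemidef ∧ M.trace = 1


/-!
For the canonical vector `stdVec μ` the greatest cross norm of its projection is `(∑ᵢ √μᵢ)²`.
The upper bound comes from writing any matrix entrywise as `∑ M_{pq} E_{p₁q₁} ⊗ E_{p₂q₂}`,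
the lower bound from pairing a decomposition `∑ xᵢ ⊗ yᵢ` with the unnormalised maximally
entangled vector: `|∑_{jk} (xᵢ)_{jk} (yᵢ)_{jk}| ≤ ‖xᵢ‖₂ ‖yᵢ‖₂ ≤ ‖xᵢ‖₁ ‖yᵢ‖₁`.
The equal-weight superposition of `(|00⟩ + |11⟩)/√2` and `(|22⟩ + |33⟩)/√2` is maximally
entangled on `ℂ⁴ ⊗ ℂ⁴`, so its value of `E` is `4 ln 4 = 8 ln 2`, whereas the right side
of (P4) is `2 ln 2 + ½ · 2 ln 2 + ½ · 2 ln 2 = 4 ln 2`.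
-/

theorem Matrix.IsHermitian.sum_eigenvalues_comp_of_eq_diagonal {ι : Type*} [Fintype ι]
    [DecidableEq ι] {A : Matrix ι ι ℂ} (hA : A.IsHermitian) (d : ι → ℝ)
    (h : A = diagonal fun i => (d i : ℂ)) (f : ℝ → ℝ) :
    ∑ i, f (hA.eigenvalues i) = ∑ i, f (d i) := by
  have hroots := hA.roots_charpoly_eq_eigenvalues
  have hcharpoly : A.charpoly = ∏ i, (Polynomial.X - Polynomial.C (d i : ℂ)) := by
    rw [h, charpoly_diagonal]
  rw [hcharpoly, Polynomial.roots_prod _ _ (by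
    simp [Finset.prod_ne_zero_iff, Polynomial.X_sub_C_ne_zero])] at hroots
  simp only [Polynomial.roots_X_sub_C] at hroots
  have := congrArg (fun s => (s.map (f ∘ Complex.re)).sum) hroots
  rw [Multiset.bind_singleton, Multiset.map_map, Multiset.map_map] at this
  exact this.symm

theorem trNorm_nonneg {a b : ℕ} (A : Matrix (Fin a) (Fin b) ℂ) : 0 ≤ trNorm A :=
  Finset.sum_nonneg fun _ _ => Real.sqrt_nonneg _

theorem trNorm_eq_sum_sqrt_of_conjTranspose_mul_self_eq_diagonal {a b : ℕ}
    (A : Matrix (Fin a) (Fin b) ℂ) (d : Fin b → ℝ) (h : Aᴴ * A = diagonal fun i => (d i : ℂ)) :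
    trNorm A = ∑ i, √(d i) :=
  Matrix.IsHermitian.sum_eigenvalues_comp_of_eq_diagonal _ d h _

theorem trNorm_single {a b : ℕ} (j : Fin a) (k : Fin b) (z : ℂ) :
    trNorm (single j k z) = ‖z‖ := by
  rw [trNorm_eq_sum_sqrt_of_conjTranspose_mul_self_eq_diagonal _ (Pi.single k (‖z‖ ^ 2))]
  · rw [Finset.sum_eq_single k (fun i _ hi => by simp [hi]) (by simp)]
    simp
  · rw [conjTranspose_single, single_mul_single_same, ← diagonal_single]
    congr 1
    ext i
    rcases eq_or_ne i k with rfl | hi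
    · simp [Complex.conj_mul']
    · simp [hi]

theorem sum_norm_sq_le_trNorm_sq {a b : ℕ} (A : Matrix (Fin a) (Fin b) ℂ) :
    ∑ i, ∑ j, ‖A i j‖ ^ 2 ≤ trNorm A ^ 2 := by
  have hA := posSemidef_conjTranspose_mul_self A
  have htrace : ∑ k, hA.1.eigenvalues k = ∑ i, ∑ j, ‖A i j‖ ^ 2 := by
    have := congrArg Complex.re hA.1.trace_eq_sum_eigenvalues
    simp only [trace, diag, mul_apply, conjTranspose_apply, Complex.re_sum, Complex.star_def,
      Complex.conj_mul'] at this
    norm_cast at this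
    rw [Finset.sum_comm]
    exact this.symm
  rw [← htrace]
  calc ∑ k, hA.1.eigenvalues k = ∑ k, √(hA.1.eigenvalues k) ^ 2 := by
        simp [Real.sq_sqrt (hA.eigenvalues_nonneg _)]
    _ ≤ trNorm A ^ 2 := Finset.sum_sq_le_sq_sum_of_nonneg fun _ _ => Real.sqrt_nonneg _

theorem norm_sum_mul_le_trNorm_mul_trNorm {a b : ℕ} (A B : Matrix (Fin a) (Fin b) ℂ) :
    ‖∑ i, ∑ j, A i j * B i j‖ ≤ trNorm A * trNorm B := by
  simp only [← Finset.sum_product']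
  calc ‖∑ p ∈ Finset.univ ×ˢ Finset.univ, A p.1 p.2 * B p.1 p.2‖
      ≤ ∑ p ∈ Finset.univ ×ˢ Finset.univ, ‖A p.1 p.2‖ * ‖B p.1 p.2‖ :=
        (norm_sum_le _ _).trans_eq (Finset.sum_congr rfl fun _ _ => norm_mul _ _)
    _ ≤ √(∑ p ∈ Finset.univ ×ˢ Finset.univ, ‖A p.1 p.2‖ ^ 2)
          * √(∑ p ∈ Finset.univ ×ˢ Finset.univ, ‖B p.1 p.2‖ ^ 2) :=
        Real.sum_mul_le_sqrt_mul_sqrt _ _ _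
    _ ≤ trNorm A * trNorm B := by
        simp only [Finset.sum_product]
        exact mul_le_mul (Real.sqrt_le_iff.mpr ⟨trNorm_nonneg _, sum_norm_sq_le_trNorm_sq A⟩)
          (Real.sqrt_le_iff.mpr ⟨trNorm_nonneg _, sum_norm_sq_le_trNorm_sq B⟩)
          (Real.sqrt_nonneg _) (trNorm_nonneg _)

section gcn

variable {m n : ℕ}

theorem kron_single_single (i j : Fin m) (k l : Fin n) (a b : ℂ) :
    kron (single i j a) (single k l b) = single (i, k) (j, l) (a * b) :=
  single_kronecker_single i j k l a b

theorem eq_sum_kron_single (M : Matrix (Fin m × Fin n) (Fin m × Fin n) ℂ) :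
    M = ∑ pq : (Fin m × Fin n) × (Fin m × Fin n),
      kron (single pq.1.1 pq.2.1 (M pq.1 pq.2)) (single pq.1.2 pq.2.2 1) := by
  simp only [kron_single_single, mul_one]
  rw [Fintype.sum_prod_type]
  exact matrix_eq_sum_single M

theorem gcn_le_of_eq_sum_kron {ι : Type*} [Fintype ι]
    {M : Matrix (Fin m × Fin n) (Fin m × Fin n) ℂ} (x : ι → Matrix (Fin m) (Fin m) ℂ) (y : ι → Matrix (Fin n) (Fin n) ℂ)
    (h : M = ∑ i, kron (x i) (y i)) : gcn M ≤ ∑ i, trNorm (x i) * trNorm (y i) := by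
  let e := (Fintype.equivFin ι).symm
  refine csInf_le ⟨0, ?_⟩ ⟨_, x ∘ e, y ∘ e, h.trans (e.sum_comp _).symm, (e.sum_comp _).symm⟩
  rintro t ⟨k, x, y, -, rfl⟩
  exact Finset.sum_nonneg fun i _ => mul_nonneg (trNorm_nonneg _) (trNorm_nonneg _)

theorem le_gcn {M : Matrix (Fin m × Fin n) (Fin m × Fin n) ℂ} {c : ℝ}
    (h : ∀ (k : ℕ) (x : Fin k → Matrix (Fin m) (Fin m) ℂ) (y : Fin k → Matrix (Fin n) (Fin n) ℂ),
      M = ∑ i, kron (x i) (y i) → c ≤ ∑ i, trNorm (x i) * trNorm (y i)) :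
    c ≤ gcn M := by
  let e := (Fintype.equivFin ((Fin m × Fin n) × (Fin m × Fin n))).symm
  refine le_csInf ⟨_, _, _, _, (eq_sum_kron_single M).trans (e.sum_comp _).symm, rfl⟩ ?_
  rintro t ⟨k, x, y, hM, rfl⟩
  exact h k x y hM

theorem gcn_le_sum_norm (M : Matrix (Fin m × Fin n) (Fin m × Fin n) ℂ) :
    gcn M ≤ ∑ p, ∑ q, ‖M p q‖ := by
  refine (gcn_le_of_eq_sum_kron _ _ (eq_sum_kron_single M)).trans_eq ?_
  simp only [trNorm_single, norm_one, mul_one]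
  exact Fintype.sum_prod_type _

theorem norm_sum_diag_le_gcn {d : ℕ} (M : Matrix (Fin d × Fin d) (Fin d × Fin d) ℂ) :
    ‖∑ j, ∑ k, M (j, j) (k, k)‖ ≤ gcn M := by
  refine le_gcn fun K x y hM => ?_
  calc ‖∑ j, ∑ k, M (j, j) (k, k)‖ = ‖∑ i, ∑ j, ∑ k, x i j k * y i j k‖ := by
        simp only [hM, Matrix.sum_apply, kron, of_apply]
        exact congrArg _ ((Finset.sum_congr rfl fun j _ => Finset.sum_comm).trans Finset.sum_comm)
    _ ≤ ∑ i, ‖∑ j, ∑ k, x i j k * y i j k‖ := norm_sum_le _ _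
    _ ≤ ∑ i, trNorm (x i) * trNorm (y i) :=
        Finset.sum_le_sum fun i _ => norm_sum_mul_le_trNorm_mul_trNorm _ _

end gcn

theorem gcn_proj_le_sq_sum_norm {m n : ℕ} (ψ : HT m n) : gcn (proj ψ) ≤ (∑ p, ‖ψ p‖) ^ 2 := by
  refine (gcn_le_sum_norm _).trans_eq ?_
  simp [proj, sq, Finset.sum_mul_sum]

section stdVec

variable {k : ℕ}

theorem stdVec_apply (μ : Fin k → ℝ) (i j : Fin k) :
    stdVec μ (i, j) = if i = j then (√(μ i) : ℂ) else 0 := rfl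

theorem sum_norm_stdVec (μ : Fin k → ℝ) : ∑ p, ‖stdVec μ p‖ = ∑ i, √(μ i) := by
  simp [Fintype.sum_prod_type, stdVec_apply, apply_ite, abs_of_nonneg (Real.sqrt_nonneg _)]

theorem gcn_proj_stdVec (μ : Fin k → ℝ) : gcn (proj (stdVec μ)) = (∑ i, √(μ i)) ^ 2 := by
  refine le_antisymm ((gcn_proj_le_sq_sum_norm _).trans_eq (by rw [sum_norm_stdVec])) ?_
  have hdiag : ∑ j, ∑ l, proj (stdVec μ) (j, j) (l, l) = (((∑ i, √(μ i)) ^ 2 : ℝ) : ℂ) := by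
    simp [proj, stdVec_apply, sq, Finset.sum_mul_sum]
  calc (∑ i, √(μ i)) ^ 2 = ‖∑ j, ∑ l, proj (stdVec μ) (j, j) (l, l)‖ := by
        rw [hdiag, Complex.norm_real, Real.norm_of_nonneg (sq_nonneg _)]
    _ ≤ gcn (proj (stdVec μ)) := norm_sum_diag_le_gcn _

theorem norm_stdVec_of_isProbDist {μ : Fin k → ℝ} (hμ : IsProbDist μ) : ‖stdVec μ‖ = 1 := by
  rw [EuclideanSpace.norm_eq, Real.sqrt_eq_one, ← hμ.2]
  simp [Fintype.sum_prod_type, stdVec_apply, apply_ite, Real.sq_sqrt (hμ.1 _)]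

theorem ptrace2_proj_stdVec (μ : Fin k → ℝ) :
    ptrace2 (proj (stdVec μ)) = diagonal fun i => ((√(μ i) ^ 2 : ℝ) : ℂ) := by
  ext i j
  rcases eq_or_ne i j with rfl | hij
  · simp [ptrace2, proj, stdVec_apply, sq]
  · simp [ptrace2, proj, stdVec_apply, hij, hij.symm]

theorem ptrace1_proj_stdVec (μ : Fin k → ℝ) :
    ptrace1 (proj (stdVec μ)) = diagonal fun i => ((√(μ i) ^ 2 : ℝ) : ℂ) := by
  ext i j
  rcases eq_or_ne i j with rfl | hij
  · simp [ptrace1, proj, stdVec_apply, sq]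
  · simp [ptrace1, proj, stdVec_apply, hij]

theorem schmidtOrthogonal_stdVec {μ ν : Fin k → ℝ} (h : ∀ i, μ i = 0 ∨ ν i = 0) :
    SchmidtOrthogonal (stdVec μ) (stdVec ν) := by
  have hdiag : ((diagonal fun i => ((√(μ i) ^ 2 : ℝ) : ℂ)) *
      diagonal fun i => ((√(ν i) ^ 2 : ℝ) : ℂ)) = 0 := by
    rw [diagonal_mul_diagonal, ← diagonal_zero]
    congr 1
    ext i
    rcases h i with hi | hi <;> simp [hi]
  rw [SchmidtOrthogonal, ptrace2_proj_stdVec, ptrace2_proj_stdVec, ptrace1_proj_stdVec,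
    ptrace1_proj_stdVec]
  exact ⟨hdiag, hdiag⟩

theorem ofReal_smul_stdVec {c : ℝ} (hc : 0 ≤ c) (μ : Fin k → ℝ) :
    (c : ℂ) • stdVec μ = stdVec fun i => c ^ 2 * μ i := by
  ext ⟨i, j⟩
  simp [stdVec_apply, Real.sqrt_mul (sq_nonneg c), Real.sqrt_sq hc]

theorem stdVec_add_stdVec {μ ν : Fin k → ℝ} (h : ∀ i, μ i = 0 ∨ ν i = 0) :
    stdVec μ + stdVec ν = stdVec (μ + ν) := by
  ext ⟨i, j⟩
  rcases h i with hi | hi <;> simp [stdVec_apply, hi]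

end stdVec

/-- The functional `σ ↦ ‖σ‖_γ ln ‖σ‖_γ` does not satisfy the superposition
axiom (P4). -/
theorem gcn_entropy_fails_P4 :
    ∃ (m n : ℕ) (ψ₁ ψ₂ : HT m n) (l₁ l₂ : ℂ),
      ‖ψ₁‖ = 1 ∧ ‖ψ₂‖ = 1 ∧ SchmidtOrthogonal ψ₁ ψ₂ ∧
      ‖l₁‖ ^ 2 + ‖l₂‖ ^ 2 = 1 ∧
      gcn (proj (l₁ • ψ₁ + l₂ • ψ₂)) * Real.log (gcn (proj (l₁ • ψ₁ + l₂ • ψ₂)))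
        ≠ gcn (proj (stdVec ![‖l₁‖ ^ 2, ‖l₂‖ ^ 2]))
            * Real.log (gcn (proj (stdVec ![‖l₁‖ ^ 2, ‖l₂‖ ^ 2])))
          + ‖l₁‖ ^ 2 * (gcn (proj ψ₁) * Real.log (gcn (proj ψ₁)))
          + ‖l₂‖ ^ 2 * (gcn (proj ψ₂) * Real.log (gcn (proj ψ₂))) := by
  set μ₁ : Fin 4 → ℝ := ![1 / 2, 1 / 2, 0, 0]
  set μ₂ : Fin 4 → ℝ := ![0, 0, 1 / 2, 1 / 2]
  set c : ℝ := √(1 / 2)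
  have hdisj : ∀ i, μ₁ i = 0 ∨ μ₂ i = 0 := by
    intro i
    fin_cases i <;> simp [μ₁, μ₂]
  have hc : ‖(c : ℂ)‖ ^ 2 = 1 / 2 := by
    rw [Complex.norm_real, Real.norm_of_nonneg (Real.sqrt_nonneg _), Real.sq_sqrt (by norm_num)]
  have hsup : (c : ℂ) • stdVec μ₁ + (c : ℂ) • stdVec μ₂ = stdVec fun _ => 1 / 4 := by
    rw [← smul_add, stdVec_add_stdVec hdisj, ofReal_smul_stdVec (Real.sqrt_nonneg _),
      Real.sq_sqrt (by norm_num)]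
    congr 1
    ext i
    fin_cases i <;> simp [μ₁, μ₂] <;> norm_num
  have hprob : IsProbDist μ₁ ∧ IsProbDist μ₂ := by
    constructor <;> refine ⟨fun i => by fin_cases i <;> simp [μ₁, μ₂], ?_⟩ <;>
      simp [μ₁, μ₂, Fin.sum_univ_four] <;> norm_num
  refine ⟨4, 4, stdVec μ₁, stdVec μ₂, c, c, norm_stdVec_of_isProbDist hprob.1,
    norm_stdVec_of_isProbDist hprob.2, schmidtOrthogonal_stdVec hdisj, by rw [hc]; norm_num, ?_⟩
  have hs₁₂ : (∑ i, √(μ₁ i)) ^ 2 = 2 ∧ (∑ i, √(μ₂ i)) ^ 2 = 2 := by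
    constructor <;> simp [μ₁, μ₂, Fin.sum_univ_four] <;> ring_nf <;> norm_num
  have hs : (∑ i, √(![1 / 2, 1 / 2] i : ℝ)) ^ 2 = 2 := by
    simp [Fin.sum_univ_two]; ring_nf; norm_num
  have hs' : (∑ _ : Fin 4, √(1 / 4 : ℝ)) ^ 2 = 4 := by norm_num
  have hlog4 : Real.log 4 = 2 * Real.log 2 := by
    rw [show (4 : ℝ) = 2 ^ 2 by norm_num, Real.log_pow, Nat.cast_ofNat]
  rw [hsup, hc, gcn_proj_stdVec, gcn_proj_stdVec, gcn_proj_stdVec, gcn_proj_stdVec, hs₁₂.1,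
    hs₁₂.2, hs, hs', hlog4]
  linarith [Real.log_pos one_lt_two]

end
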